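/- arXiv:2502.10165 — 2 statements merged into one kernel-verified Lean document; each statement's English description precedes it below -/
import Mathlib

section
/- Every finite-rank order continuous lattice homomorphism T: X → Y between Banach lattices attains its norm, i.e., there exists x in the closed unit ball of X with ‖Tx‖ = ‖T‖. -/
/-!
Let `B` be the disjoint complement of `ker T`. Since `B ∩ ker T = 0`, `T` is injective on `B`,
so `B` is finite-dimensional and `T` restricted to `B` attains its norm on the unit ball of `B`.
It remains to see that every `T x` equals `T v` for some `v ∈ B` with `‖v‖ ≤ ‖x‖`.

For `x ≥ 0`, the ideal `ker T + B` is order dense, so (the norm being Archimedean) `x` is the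
supremum of the upward directed set `D` of elements of `ker T + B` in `[0, x]`. By order
continuity `T x` is the supremum of `T '' D`, which lies in a bounded part of the
finite-dimensional space `T '' B`; a cluster point of this increasing net is an upper bound
below `T x`, hence equals `T x`, which therefore lies in `T '' B`. Splitting `x = x⁺ - x⁻` gives
`v ∈ B` with `T v = T x`, and `|v| ≤ |x|` because `x - v ∈ ker T` is disjoint from `v`.
-/

open Set LatticeOrderedAddCommGroup

section LatticeOrderedAddCommGroup

variable {α : Type*} [Lattice α] [AddCommGroup α] [IsOrderedAddMonoid α] {a b c : α}

lemma inf_add_le_inf_add_inf (ha : 0 ≤ a) (hb : 0 ≤ b) (hc : 0 ≤ c) :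
    a ⊓ (b + c) ≤ a ⊓ b + a ⊓ c := by
  rw [inf_add, add_inf, add_inf]
  refine le_inf (le_inf ?_ ?_) (le_inf ?_ inf_le_right)
  · exact inf_le_left.trans (le_add_of_nonneg_left ha)
  · exact inf_le_left.trans (le_add_of_nonneg_right hc)
  · exact inf_le_left.trans (le_add_of_nonneg_left hb)

lemma inf_nsmul_eq_zero (ha : 0 ≤ a) (hb : 0 ≤ b) (hab : a ⊓ b = 0) (n : ℕ) : a ⊓ n • b = 0 := by
  induction n with
  | zero => simpa using inf_le_right.antisymm (le_inf ha le_rfl)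
  | succ n ih =>
    refine le_antisymm ?_ (le_inf ha (nsmul_nonneg hb _))
    calc a ⊓ (n + 1) • b ≤ a ⊓ n • b + a ⊓ b :=
          succ_nsmul b n ▸ inf_add_le_inf_add_inf ha (nsmul_nonneg hb n) hb
      _ = 0 := by rw [ih, hab, add_zero]

lemma nonneg_of_nsmul_nonneg {n : ℕ} (hn : n ≠ 0) (h : 0 ≤ n • a) : 0 ≤ a := by
  have hle : n • a⁻ ≤ n • a⁺ := by
    rwa [← sub_nonneg, ← nsmul_sub, posPart_sub_negPart]
  have hdisj : n • a⁻ ⊓ n • a⁺ = 0 := by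
    refine inf_nsmul_eq_zero (nsmul_nonneg (negPart_nonneg a) n) (posPart_nonneg a) ?_ n
    rw [inf_comm]
    exact inf_nsmul_eq_zero (posPart_nonneg a) (negPart_nonneg a) (posPart_inf_negPart_eq_zero a) n
  have hzero : n • a⁻ = 0 := by rwa [inf_eq_left.2 hle] at hdisj
  refine negPart_eq_zero.1 (le_antisymm ?_ (negPart_nonneg a))
  calc a⁻ = 1 • a⁻ := (one_nsmul _).symm
    _ ≤ n • a⁻ := nsmul_le_nsmul_left (negPart_nonneg a) (Nat.one_le_iff_ne_zero.2 hn)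
    _ = 0 := hzero

lemma eq_zero_of_abs_nonpos (h : |a| ≤ 0) : a = 0 :=
  le_antisymm ((le_abs_self a).trans h) (neg_nonpos.1 ((neg_le_abs a).trans h))

lemma sub_inf_le_of_le_add (h : c ≤ a + b) (hb : 0 ≤ b) : c - c ⊓ a ≤ b := by
  rw [sub_inf, sub_self]
  exact sup_le hb (sub_le_iff_le_add'.2 h)

lemma abs_le_abs_add_of_inf_abs_eq_zero (h : |a| ⊓ |b| = 0) : |a| ≤ |a + b| := by
  have hab : |a| ≤ |a + b| + |b| := by
    simpa using abs_add_le (a + b) (-b)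
  calc |a| = |a| ⊓ (|a + b| + |b|) := (inf_eq_left.2 hab).symm
    _ ≤ |a| ⊓ |a + b| + |a| ⊓ |b| :=
      inf_add_le_inf_add_inf (abs_nonneg a) (abs_nonneg _) (abs_nonneg b)
    _ ≤ |a + b| := by rw [h, add_zero]; exact inf_le_right

lemma isSolid_sup {R : Type*} [Ring R] [Module R α] {p q : Submodule R α}
    (hp : IsSolid (p : Set α)) (hq : IsSolid (q : Set α)) :
    IsSolid ((p ⊔ q : Submodule R α) : Set α) := by
  intro x hx z hzx
  obtain ⟨b, hb, v, hv, rfl⟩ := Submodule.mem_sup.1 hx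
  have hmem : ∀ s, 0 ≤ s → s ≤ |z| → s ∈ p ⊔ q := by
    intro s hs hsz
    have hs' : s ≤ |b| + |v| := hsz.trans (hzx.trans (abs_add_le b v))
    refine Submodule.mem_sup.2 ⟨s ⊓ |b|, hp hb ?_, s - s ⊓ |b|, hq hv ?_, add_sub_cancel _ _⟩
    · rw [abs_of_nonneg (le_inf hs (abs_nonneg b))]
      exact inf_le_right
    · rw [abs_of_nonneg (sub_nonneg.2 inf_le_left)]
      exact sub_inf_le_of_le_add hs' (abs_nonneg v)
  rw [← posPart_sub_negPart z]
  exact Submodule.sub_mem _ (hmem _ (posPart_nonneg z) (sup_le (le_abs_self z) (abs_nonneg z)))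
    (hmem _ (negPart_nonneg z) (sup_le (neg_le_abs z) (abs_nonneg z)))

end LatticeOrderedAddCommGroup

section OrderedModule

variable {R α : Type*} [Ring R] [LinearOrder R] [IsOrderedRing R] [Lattice α] [AddCommGroup α]
  [Module R α] [PosSMulMono R α]

lemma abs_smul_le (r : R) (a : α) : |r • a| ≤ |r| • |a| := by
  have key : ∀ s : R, 0 ≤ s → ∀ b : α, |s • b| ≤ s • |b| := fun s hs b =>
    abs_le'.2 ⟨smul_le_smul_of_nonneg_left (le_abs_self b) hs, by
      rw [← smul_neg]; exact smul_le_smul_of_nonneg_left (neg_le_abs b) hs⟩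
  rcases le_total 0 r with hr | hr
  · rw [abs_of_nonneg hr]
    exact key r hr a
  · simpa [abs_of_nonpos hr] using key (-r) (neg_nonneg.2 hr) (-a)

end OrderedModule

section DisjointComplement

variable {X : Type*} [Lattice X] [AddCommGroup X] [IsOrderedAddMonoid X] [Module ℝ X]
  [PosSMulMono ℝ X]

def disjointComplement (S : Set X) : Submodule ℝ X where
  carrier := {v | ∀ b ∈ S, |v| ⊓ |b| = 0}
  zero_mem' b _ := by rw [abs_zero, inf_eq_left.2 (abs_nonneg b)]
  add_mem' {v w} hv hw b hb := by
    refine le_antisymm ?_ (le_inf (abs_nonneg _) (abs_nonneg b))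
    calc |v + w| ⊓ |b| ≤ |b| ⊓ (|v| + |w|) := by rw [inf_comm]; gcongr; exact abs_add_le v w
      _ ≤ |b| ⊓ |v| + |b| ⊓ |w| :=
        inf_add_le_inf_add_inf (abs_nonneg b) (abs_nonneg v) (abs_nonneg w)
      _ = 0 := by rw [inf_comm, hv b hb, inf_comm, hw b hb, add_zero]
  smul_mem' r v hv b hb := by
    refine le_antisymm ?_ (le_inf (abs_nonneg _) (abs_nonneg b))
    obtain ⟨n, hn⟩ := exists_nat_ge |r|
    calc |r • v| ⊓ |b| ≤ |b| ⊓ n • |v| := by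
          rw [inf_comm, ← Nat.cast_smul_eq_nsmul ℝ]
          gcongr
          exact (abs_smul_le r v).trans (smul_le_smul_of_nonneg_right hn (abs_nonneg v))
      _ = 0 := inf_nsmul_eq_zero (abs_nonneg b) (abs_nonneg v) (by rw [inf_comm, hv b hb]) n

lemma isSolid_disjointComplement (S : Set X) : IsSolid (disjointComplement S : Set X) :=
  fun _ hv _ hzv b hb => le_antisymm ((inf_le_inf_right _ hzv).trans_eq (hv b hb))
    (le_inf (abs_nonneg _) (abs_nonneg b))

lemma eq_zero_of_mem_disjointComplement {S : Set X} {v : X} (hv : v ∈ disjointComplement S)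
    (hvS : v ∈ S) : v = 0 := by
  exact eq_zero_of_abs_nonpos (by simpa using (hv v hvS).le)

lemma eq_zero_of_sup_disjointComplement_inter_Icc_subset {I : Submodule ℝ X}
    (hI : IsSolid (I : Set X)) {z : X} (hz : 0 ≤ z)
    (h : ((I ⊔ disjointComplement (I : Set X) : Submodule ℝ X) : Set X) ∩ Icc 0 z ⊆ {0}) :
    z = 0 := by
  have hzI : z ∈ disjointComplement (I : Set X) := fun b hb => by
    have hzb : z ⊓ |b| ∈ I := hI hb <| by
      rw [abs_of_nonneg (le_inf hz (abs_nonneg b))]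
      exact inf_le_right
    rw [abs_of_nonneg hz]
    exact h ⟨Submodule.mem_sup_left hzb, le_inf hz (abs_nonneg b), inf_le_left⟩
  exact h ⟨Submodule.mem_sup_right hzI, hz, le_rfl⟩

lemma finiteDimensional_disjointComplement_ker {Y : Type*} [AddCommGroup Y] [Module ℝ Y]
    {T : X →ₗ[ℝ] Y} (hrank : FiniteDimensional ℝ (LinearMap.range T)) :
    FiniteDimensional ℝ (disjointComplement (LinearMap.ker T : Set X)) := by
  let f : disjointComplement (LinearMap.ker T : Set X) →ₗ[ℝ] LinearMap.range T :=
    (T.domRestrict _).codRestrict _ fun v => LinearMap.mem_range_self _ _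
  refine FiniteDimensional.of_injective f ((injective_iff_map_eq_zero f).2 fun v hv => ?_)
  exact Subtype.ext (eq_zero_of_mem_disjointComplement v.2 (congrArg Subtype.val hv))

end DisjointComplement

lemma directedOn_inter_Icc {R X : Type*} [Ring R] [Lattice X] [AddCommGroup X]
    [IsOrderedAddMonoid X] [Module R X] {J : Submodule R X} (hJ : IsSolid (J : Set X)) (x : X) :
    DirectedOn (· ≤ ·) ((J : Set X) ∩ Icc 0 x) := by
  rintro w₁ ⟨hw₁J, hw₁, hw₁x⟩ w₂ ⟨hw₂J, hw₂, hw₂x⟩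
  refine ⟨w₁ ⊔ w₂, ⟨hJ (J.add_mem hw₁J hw₂J) ?_, le_sup_of_le_left hw₁, sup_le hw₁x hw₂x⟩,
    le_sup_left, le_sup_right⟩
  rw [abs_of_nonneg (le_sup_of_le_left hw₁), abs_of_nonneg (add_nonneg hw₁ hw₂)]
  exact sup_le (le_add_of_nonneg_right hw₂) (le_add_of_nonneg_left hw₁)

section LatticeHom

variable {X Y F : Type*} [Lattice X] [Lattice Y] [FunLike F X Y] {T : F}

lemma monotone_of_map_sup (hT : ∀ x y, T (x ⊔ y) = T x ⊔ T y) : Monotone T := fun a b hab => by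
  rw [← sup_eq_right.2 hab, hT]
  exact le_sup_left

variable [AddCommGroup X] [AddCommGroup Y] [AddMonoidHomClass F X Y]

lemma map_abs_of_map_sup (hT : ∀ x y, T (x ⊔ y) = T x ⊔ T y) (a : X) : T |a| = |T a| := by
  simp only [abs, hT, map_neg]

variable [IsOrderedAddMonoid Y]

lemma isSolid_ker_of_map_sup (hT : ∀ x y, T (x ⊔ y) = T x ⊔ T y) : IsSolid {x | T x = 0} := by
  intro a ha z hza
  refine eq_zero_of_abs_nonpos ?_
  rw [← map_abs_of_map_sup hT, ← abs_zero, ← (ha : T a = 0), ← map_abs_of_map_sup hT]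
  exact monotone_of_map_sup hT hza

variable [IsOrderedAddMonoid X]

lemma isLUB_image_of_orderContinuous (hT : Monotone T)
    (hoc : ∀ S : Set X, S.Nonempty → DirectedOn (· ≥ ·) S → IsGLB S 0 →
      IsGLB ((fun x => |T x|) '' S) 0)
    {D : Set X} {x : X} (hne : D.Nonempty) (hD : DirectedOn (· ≤ ·) D) (hx : IsLUB D x) :
    IsLUB (T '' D) (T x) := by
  have hglb : IsGLB ((x - ·) '' D) 0 := by
    refine ⟨?_, fun l hl => ?_⟩
    · rintro - ⟨w, hw, rfl⟩
      exact sub_nonneg.2 (hx.1 hw)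
    · have : x - l ∈ upperBounds D := fun w hw => le_sub_comm.1 (hl ⟨w, hw, rfl⟩)
      simpa using sub_le_sub_left (hx.2 this) x
  have hTglb := hoc _ (hne.image _) (hD.mono_comp fun _ _ h => sub_le_sub_left h x) hglb
  refine ⟨?_, fun u hu => ?_⟩
  · rintro - ⟨w, hw, rfl⟩
    exact hT (hx.1 hw)
  · refine sub_nonpos.1 (hTglb.2 ?_)
    rintro - ⟨-, ⟨w, hw, rfl⟩, rfl⟩
    change T x - u ≤ |T (x - w)|
    rw [map_sub, abs_of_nonneg (sub_nonneg.2 (hT (hx.1 hw)))]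
    exact sub_le_sub_left (hu ⟨w, hw, rfl⟩) _

end LatticeHom

section NormedLattice

variable {X : Type*} [NormedAddCommGroup X] [Lattice X] [IsOrderedAddMonoid X] [HasSolidNorm X]
  [NormedSpace ℝ X]

/-- Positive rational multiples of `x ≥ 0` are positive by cancellation of `nsmul`; the positive
cone is closed, and the rationals are dense. -/
instance HasSolidNorm.toIsOrderedModule : IsOrderedModule ℝ X := by
  refine .of_smul_nonneg fun r hr x hx => ?_
  have hdiv : ∀ m n : ℕ, 0 ≤ ((m : ℝ) / n) • x := by
    intro m n
    rcases eq_or_ne n 0 with rfl | hn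
    · simp
    refine nonneg_of_nsmul_nonneg hn ?_
    rw [← Nat.cast_smul_eq_nsmul ℝ, smul_smul, mul_div_cancel₀ _ (Nat.cast_ne_zero.2 hn),
      Nat.cast_smul_eq_nsmul]
    exact nsmul_nonneg hx m
  have hrat : range ((↑) : ℚ → ℝ) ⊆ {t | 0 ≤ |t| • x} := by
    rintro - ⟨q, rfl⟩
    have : |(q : ℝ)| = (q.num.natAbs : ℝ) / q.den := by
      rw [Field.ratCast_def, abs_div, Nat.abs_cast, Nat.cast_natAbs, Int.cast_abs]
    change 0 ≤ |(q : ℝ)| • x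
    rw [this]
    exact hdiv _ _
  have hclosed : IsClosed {t : ℝ | 0 ≤ |t| • x} :=
    isClosed_nonneg.preimage (continuous_abs.smul continuous_const)
  simpa [abs_of_nonneg hr] using hclosed.closure_subset_iff.2 hrat (Rat.denseRange_cast r)

lemma eq_zero_of_forall_nsmul_le {w x : X} (hw : 0 ≤ w) (h : ∀ n : ℕ, n • w ≤ x) : w = 0 := by
  have hx : 0 ≤ x := by simpa using h 0
  have hbound : ∀ n : ℕ, n * ‖w‖ ≤ ‖x‖ := fun n => by
    have := norm_le_norm_of_abs_le_abs (a := n • w) (b := x) (by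
      rw [abs_of_nonneg (nsmul_nonneg hw n), abs_of_nonneg hx]; exact h n)
    rwa [← Nat.cast_smul_eq_nsmul ℝ, norm_smul, Real.norm_natCast] at this
  by_contra hne
  obtain ⟨n, hn⟩ := exists_nat_gt (‖x‖ / ‖w‖)
  have hpos : 0 < ‖w‖ := norm_pos_iff.2 hne
  exact (hbound n).not_gt ((div_lt_iff₀ hpos).1 hn)

lemma isLUB_inter_Icc {J : Submodule ℝ X}
    (hJ : ∀ z, 0 ≤ z → (J : Set X) ∩ Icc 0 z ⊆ {0} → z = 0) {x : X} (hx : 0 ≤ x) :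
    IsLUB ((J : Set X) ∩ Icc 0 x) x := by
  refine ⟨fun w hw => hw.2.2, fun y hy => ?_⟩
  set z := x - x ⊓ y
  suffices z = 0 by rwa [sub_eq_zero, eq_comm, inf_eq_left] at this
  refine hJ z (sub_nonneg.2 inf_le_left) fun w ⟨hwJ, hw, hwz⟩ => ?_
  -- every multiple of such a `w` stays in `J ∩ [0, x]`, so the norm makes `w` vanish
  refine eq_zero_of_forall_nsmul_le hw (x := x) fun n => ?_
  induction n with
  | zero => simpa using hx
  | succ n ih =>
    have hn : n • w ≤ x ⊓ y := le_inf ih (hy ⟨J.nsmul_mem hwJ n, nsmul_nonneg hw n, ih⟩)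
    calc (n + 1) • w = n • w + w := succ_nsmul w n
      _ ≤ x ⊓ y + z := add_le_add hn hwz
      _ = x := add_sub_cancel _ _

end NormedLattice

lemma IsLUB.mem_of_isCompact {Y : Type*} [TopologicalSpace Y] [PartialOrder Y]
    [OrderClosedTopology Y] {s K : Set Y} {y : Y} (hy : IsLUB s y) (hs : DirectedOn (· ≤ ·) s)
    (hne : s.Nonempty) (hK : IsCompact K) (hsK : s ⊆ K) : y ∈ K := by
  have : Nonempty s := hne.to_subtype
  have : IsDirectedOrder s := ⟨fun a b =>
    let ⟨c, hc, hac, hbc⟩ := hs a a.2 b b.2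
    ⟨⟨c, hc⟩, hac, hbc⟩⟩
  obtain ⟨p, hpK, hp⟩ := hK.exists_mapClusterPt (f := Filter.atTop) (u := ((↑) : s → Y))
    (Filter.tendsto_principal.2 (Filter.Eventually.of_forall fun a => hsK a.2))
  have hup : p ∈ upperBounds s := fun w hw =>
    isClosed_Ici.mem_of_mapClusterPt hp (Filter.eventually_ge_atTop (⟨w, hw⟩ : s))
  have hle : p ≤ y :=
    isClosed_Iic.mem_of_mapClusterPt hp (Filter.Eventually.of_forall fun a => hy.1 a.2)
  rwa [le_antisymm hle (hy.2 hup)] at hpK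

namespace ContinuousLinearMap

variable {𝕜 E F : Type*} [DenselyNormedField 𝕜] [NormedAddCommGroup E] [NormedSpace 𝕜 E]
  [NormedAddCommGroup F] [NormedSpace 𝕜 F]

theorem exists_norm_le_one_norm_apply_eq_opNorm [ProperSpace E] (f : E →L[𝕜] F) :
    ∃ x, ‖x‖ ≤ 1 ∧ ‖f x‖ = ‖f‖ := by
  obtain ⟨x, hx, hfx⟩ := ((isCompact_closedBall (0 : E) 1).image (by fun_prop :
    Continuous fun x => ‖f x‖)).sSup_mem ((Metric.nonempty_closedBall.2 zero_le_one).image _)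
  rw [f.sSup_unitClosedBall_eq_norm] at hfx
  exact ⟨x, mem_closedBall_zero_iff.1 hx, hfx⟩

theorem opNorm_comp_subtypeL_eq (f : E →L[𝕜] F) {p : Submodule 𝕜 E}
    (hp : ∀ x, ∃ v ∈ p, f v = f x ∧ ‖v‖ ≤ ‖x‖) : ‖f ∘L p.subtypeL‖ = ‖f‖ := by
  refine le_antisymm ((f ∘L p.subtypeL).opNorm_le_bound (norm_nonneg f) fun v => f.le_opNorm v)
    (f.opNorm_le_bound (norm_nonneg _) fun x => ?_)
  obtain ⟨v, hv, hfv, hvx⟩ := hp x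
  calc ‖f x‖ = ‖(f ∘L p.subtypeL) ⟨v, hv⟩‖ := by simp [hfv]
    _ ≤ ‖f ∘L p.subtypeL‖ * ‖v‖ := (f ∘L p.subtypeL).le_opNorm _
    _ ≤ ‖f ∘L p.subtypeL‖ * ‖x‖ := by gcongr

end ContinuousLinearMap

section FiniteRankLatticeHom

variable {X Y : Type*} [NormedAddCommGroup X] [Lattice X] [IsOrderedAddMonoid X] [HasSolidNorm X]
  [NormedSpace ℝ X] [NormedAddCommGroup Y] [Lattice Y] [IsOrderedAddMonoid Y] [HasSolidNorm Y]
  [NormedSpace ℝ Y] {T : X →L[ℝ] Y}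

lemma exists_mem_disjointComplement_ker_apply_eq_of_nonneg
    (hhom : ∀ x y : X, T (x ⊔ y) = T x ⊔ T y)
    (hrank : FiniteDimensional ℝ (LinearMap.range (T : X →ₗ[ℝ] Y)))
    (hoc : ∀ S : Set X, S.Nonempty → DirectedOn (· ≥ ·) S → IsGLB S 0 →
      IsGLB ((fun x => |T x|) '' S) 0)
    {x : X} (hx : 0 ≤ x) :
    ∃ v ∈ disjointComplement (LinearMap.ker (T : X →ₗ[ℝ] Y) : Set X), T v = T x := by
  set K := LinearMap.ker (T : X →ₗ[ℝ] Y)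
  set B := disjointComplement (K : Set X)
  have hK : IsSolid (K : Set X) := isSolid_ker_of_map_sup hhom
  have hmono : Monotone T := monotone_of_map_sup hhom
  set D := ((K ⊔ B : Submodule ℝ X) : Set X) ∩ Icc 0 x
  have hD : DirectedOn (· ≤ ·) D :=
    directedOn_inter_Icc (isSolid_sup hK (isSolid_disjointComplement _)) x
  have hne : D.Nonempty := ⟨0, zero_mem _, le_rfl, hx⟩
  have hlub : IsLUB (T '' D) (T x) := isLUB_image_of_orderContinuous hmono hoc hne hD
    (isLUB_inter_Icc (fun _ hz => eq_zero_of_sup_disjointComplement_inter_Icc_subset hK hz) hx)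
  set V := B.map (T : X →ₗ[ℝ] Y)
  have : FiniteDimensional ℝ V := Submodule.finiteDimensional_of_le (LinearMap.map_le_range)
  have hsub : T '' D ⊆ (↑) '' Metric.closedBall (0 : V) ‖T x‖ := by
    rintro - ⟨w, ⟨hwJ, hw, hwx⟩, rfl⟩
    obtain ⟨b, hb, v, hv, rfl⟩ := Submodule.mem_sup.1 hwJ
    have hTb : T b = 0 := hb
    have hTw : T (b + v) = T v := by rw [map_add, hTb, zero_add]
    refine ⟨⟨T v, v, hv, rfl⟩, ?_, hTw.symm⟩
    rw [mem_closedBall_zero_iff]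
    change ‖T v‖ ≤ ‖T x‖
    rw [← hTw]
    refine norm_le_norm_of_abs_le_abs ?_
    rw [abs_of_nonneg (by simpa using hmono hw), abs_of_nonneg (by simpa using hmono hx)]
    exact hmono hwx
  obtain ⟨⟨-, v, hv, rfl⟩, -, hvx⟩ := hlub.mem_of_isCompact (hD.mono_comp fun _ _ h => hmono h)
    (hne.image _) ((isCompact_closedBall _ _).image continuous_subtype_val) hsub
  exact ⟨v, hv, hvx⟩

lemma exists_mem_disjointComplement_ker_apply_eq
    (hhom : ∀ x y : X, T (x ⊔ y) = T x ⊔ T y)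
    (hrank : FiniteDimensional ℝ (LinearMap.range (T : X →ₗ[ℝ] Y)))
    (hoc : ∀ S : Set X, S.Nonempty → DirectedOn (· ≥ ·) S → IsGLB S 0 →
      IsGLB ((fun x => |T x|) '' S) 0)
    (x : X) :
    ∃ v ∈ disjointComplement (LinearMap.ker (T : X →ₗ[ℝ] Y) : Set X), T v = T x ∧ ‖v‖ ≤ ‖x‖ := by
  obtain ⟨v₁, hv₁, h₁⟩ :=
    exists_mem_disjointComplement_ker_apply_eq_of_nonneg hhom hrank hoc (posPart_nonneg x)
  obtain ⟨v₂, hv₂, h₂⟩ :=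
    exists_mem_disjointComplement_ker_apply_eq_of_nonneg hhom hrank hoc (negPart_nonneg x)
  have hTv : T (v₁ - v₂) = T x := by rw [map_sub, h₁, h₂, ← map_sub, posPart_sub_negPart]
  have hv := Submodule.sub_mem _ hv₁ hv₂
  refine ⟨v₁ - v₂, hv, hTv, norm_le_norm_of_abs_le_abs ?_⟩
  have hdisj := hv (x - (v₁ - v₂)) (by simp [hTv])
  simpa using abs_le_abs_add_of_inf_abs_eq_zero hdisj

end FiniteRankLatticeHom

theorem finiteRank_orderContinuous_latticeHom_attains_norm_general
    {X Y : Type*} [NormedAddCommGroup X] [Lattice X] [IsOrderedAddMonoid X] [HasSolidNorm X] [NormedSpace ℝ X]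
    [NormedAddCommGroup Y] [Lattice Y] [IsOrderedAddMonoid Y] [HasSolidNorm Y] [NormedSpace ℝ Y]
    (T : X →L[ℝ] Y)
    (hhom : ∀ x y : X, T (x ⊔ y) = T x ⊔ T y)
    (hrank : FiniteDimensional ℝ (LinearMap.range (T : X →ₗ[ℝ] Y)))
    (hoc : ∀ S : Set X, S.Nonempty → DirectedOn (· ≥ ·) S → IsGLB S 0 →
      IsGLB ((fun x => |T x|) '' S) 0) :
    ∃ x : X, ‖x‖ ≤ 1 ∧ ‖T x‖ = ‖T‖ := by
  set B := disjointComplement (LinearMap.ker (T : X →ₗ[ℝ] Y) : Set X)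
  have : FiniteDimensional ℝ B := finiteDimensional_disjointComplement_ker hrank
  obtain ⟨v, hv, hTv⟩ := (T ∘L B.subtypeL).exists_norm_le_one_norm_apply_eq_opNorm
  refine ⟨v, hv, ?_⟩
  rwa [← T.opNorm_comp_subtypeL_eq (exists_mem_disjointComplement_ker_apply_eq hhom hrank hoc)]

/-- every finite-rank order continuous lattice homomorphism between Banach
lattices attains its norm. -/
theorem finiteRank_orderContinuous_latticeHom_attains_norm
    {X Y : Type*} [NormedAddCommGroup X] [Lattice X] [IsOrderedAddMonoid X] [HasSolidNorm X] [NormedSpace ℝ X] [CompleteSpace X]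
    [NormedAddCommGroup Y] [Lattice Y] [IsOrderedAddMonoid Y] [HasSolidNorm Y] [NormedSpace ℝ Y] [CompleteSpace Y]
    (T : X →L[ℝ] Y)
    (hhom : ∀ x y : X, T (x ⊔ y) = T x ⊔ T y)
    (hrank : FiniteDimensional ℝ (LinearMap.range (T : X →ₗ[ℝ] Y)))
    (hoc : ∀ S : Set X, S.Nonempty → DirectedOn (· ≥ ·) S → IsGLB S 0 →
      IsGLB ((fun x => |T x|) '' S) 0) :
    ∃ x : X, ‖x‖ ≤ 1 ∧ ‖T x‖ = ‖T‖ :=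
  finiteRank_orderContinuous_latticeHom_attains_norm_general T hhom hrank hoc
end

section
/- Let X be an AM-space, Y a Banach lattice, and T: X → Y a finite-rank lattice homomorphism. Then T attains its norm: there exists x₀ in the closed unit ball of X with ‖Tx₀‖ = ‖T‖. -/
/-!
Take positive `yₙ` in the unit ball with `‖T yₙ‖ → ‖T‖`; replacing `yₙ` by `y₀ ⊔ ⋯ ⊔ yₙ` keeps
them in the unit ball (this is where the AM-norm is used) and makes `T yₙ` increase. In the
finite-dimensional range of `T` the sequence `T yₙ` converges to some `z` with `‖z‖ = ‖T‖`, and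
because the order interval `[0, z]` of the range is spanned by finitely many of its elements,
norm convergence there upgrades to relatively uniform convergence: `z - T yₙ ≤ εₙ z` with
`εₙ → 0`. Along a subsequence with `εₙ = 2⁻ⁿ`, the truncations `a ⊔ (y ⊓ (a + 2ε y))` then
produce a Cauchy sequence in the unit ball of `X` whose images converge to `z`; its limit
attains the norm.
-/

open Filter Topology

section NormedLattice

lemma inv_two_pow_smul_nonneg {E : Type*} [Lattice E] [AddCommGroup E] [IsOrderedAddMonoid E]
    [Module ℝ E] {x : E} (hx : 0 ≤ x) (n : ℕ) : 0 ≤ ((2 : ℝ) ^ n)⁻¹ • x := by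
  induction n with
  | zero => simpa using hx
  | succ n ih =>
    refine nsmul_two_semiclosed ?_
    rwa [← Nat.cast_smul_eq_nsmul ℝ, smul_smul, pow_succ, mul_inv, mul_left_comm,
      Nat.cast_ofNat, mul_inv_cancel₀ two_ne_zero, mul_one]

variable {E : Type*} [NormedAddCommGroup E] [Lattice E] [HasSolidNorm E] [IsOrderedAddMonoid E]

/-- The positive cone is closed, and `c` is a limit of dyadic rationals `⌊c 2ⁿ⌋₊ / 2ⁿ`. -/
lemma HasSolidNorm.smul_nonneg [NormedSpace ℝ E] {c : ℝ} (hc : 0 ≤ c) {x : E} (hx : 0 ≤ x) :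
    0 ≤ c • x := by
  have hdyadic : Tendsto (fun n : ℕ ↦ (⌊c * 2 ^ n⌋₊ : ℝ) / 2 ^ n) atTop (𝓝 c) :=
    (tendsto_nat_floor_mul_div_atTop hc).comp (tendsto_pow_atTop_atTop_of_one_lt one_lt_two)
  refine ge_of_tendsto' (hdyadic.smul_const x) fun n ↦ ?_
  rw [div_eq_mul_inv, mul_smul, Nat.cast_smul_eq_nsmul]
  exact nsmul_nonneg (inv_two_pow_smul_nonneg hx n) _

instance HasSolidNorm.isOrderedModule [NormedSpace ℝ E] : IsOrderedModule ℝ E :=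
  .of_smul_nonneg fun _ hc _ hx ↦ HasSolidNorm.smul_nonneg hc hx

lemma norm_le_norm_of_nonneg_of_le {a b : E} (ha : 0 ≤ a) (hab : a ≤ b) : ‖a‖ ≤ ‖b‖ :=
  norm_le_norm_of_abs_le_abs <| by rwa [abs_of_nonneg ha, abs_of_nonneg (ha.trans hab)]

lemma tendsto_of_sub_le_smul [NormedSpace ℝ E] {ι : Type*} {l : Filter ι} {u : ι → E} {z : E}
    {ε : ι → ℝ} (hle : ∀ i, u i ≤ z) (hsub : ∀ i, z - u i ≤ ε i • z) (hε : Tendsto ε l (𝓝 0)) :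
    Tendsto u l (𝓝 z) := by
  refine tendsto_iff_norm_sub_tendsto_zero.2 <| squeeze_zero (fun _ ↦ norm_nonneg _) (fun i ↦ ?_)
    (by simpa using hε.norm.mul_const ‖z‖)
  rw [norm_sub_rev, ← Real.norm_eq_abs, ← norm_smul]
  exact norm_le_norm_of_nonneg_of_le (sub_nonneg.2 (hle i)) (hsub i)

lemma Monotone.tendsto_of_tendsto_subseq {u : ℕ → E} (hu : Monotone u) {φ : ℕ → ℕ}
    (hφ : StrictMono φ) {z : E} (hlim : Tendsto (u ∘ φ) atTop (𝓝 z)) :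
    Tendsto u atTop (𝓝 z) := by
  have hle : ∀ n, u n ≤ z := fun n ↦ _root_.ge_of_tendsto hlim <|
    eventually_atTop.2 ⟨n, fun k hk ↦ hu (hk.trans hφ.le_apply)⟩
  rw [Metric.tendsto_atTop] at hlim ⊢
  intro ε hε
  obtain ⟨K, hK⟩ := hlim ε hε
  refine ⟨φ K, fun n hn ↦ ?_⟩
  have hφK := hK K le_rfl
  rw [Function.comp_apply, dist_eq_norm'] at hφK
  rw [dist_eq_norm']
  exact (norm_le_norm_of_nonneg_of_le (sub_nonneg.2 (hle n)) (sub_le_sub_left (hu hn) z)).trans_lt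
    hφK

end NormedLattice

section FiniteDimensional

lemma exists_le_mul_norm_smul_of_subset_Icc {E : Type*} [NormedAddCommGroup E] [PartialOrder E]
    [IsOrderedAddMonoid E] [NormedSpace ℝ E] [IsOrderedModule ℝ E] {s : Set E} {z : E}
    [FiniteDimensional ℝ (Submodule.span ℝ s)] (hs : s ⊆ Set.Icc 0 z) :
    ∃ C, ∀ v ∈ Submodule.span ℝ s, v ≤ (C * ‖v‖) • z := by
  have hspan := (Submodule.span_span_coe_preimage (R := ℝ) (s := s)).ge
  obtain ⟨ι, b, hb⟩ : ∃ (ι : Set (Submodule.span ℝ s)) (b : Module.Basis ι ℝ (Submodule.span ℝ s)),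
      ∀ i, (b i : E) ∈ s :=
    ⟨_, .ofSpan hspan, fun i ↦ Set.range_subset_iff.1 (Module.Basis.ofSpan_subset hspan) i⟩
  have := Module.Finite.finite_basis b
  have := Fintype.ofFinite ι
  let e := b.equivFun.toContinuousLinearEquiv.toContinuousLinearMap
  refine ⟨Fintype.card ι * ‖e‖, fun v hv ↦ ?_⟩
  have hcoord : ∀ i, |b.equivFun ⟨v, hv⟩ i| ≤ ‖e‖ * ‖v‖ := fun i ↦
    (norm_le_pi_norm (b.equivFun ⟨v, hv⟩) i).trans (e.le_opNorm ⟨v, hv⟩)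
  have hterm : ∀ i, b.equivFun ⟨v, hv⟩ i • (b i : E) ≤ (‖e‖ * ‖v‖) • z := by
    intro i
    obtain ⟨hb0, hbz⟩ := hs (hb i)
    calc _ ≤ |b.equivFun ⟨v, hv⟩ i| • (b i : E) := smul_le_smul_of_nonneg_right (le_abs_self _) hb0
      _ ≤ |b.equivFun ⟨v, hv⟩ i| • z := smul_le_smul_of_nonneg_left hbz (abs_nonneg _)
      _ ≤ (‖e‖ * ‖v‖) • z := smul_le_smul_of_nonneg_right (hcoord i) (hb0.trans hbz)
  calc v = ∑ i, b.equivFun ⟨v, hv⟩ i • (b i : E) := by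
        have h := congrArg Subtype.val (b.sum_equivFun ⟨v, hv⟩)
        push_cast at h
        exact h.symm
    _ ≤ ∑ i, (‖e‖ * ‖v‖) • z := Finset.sum_le_sum fun i _ ↦ hterm i
    _ = (Fintype.card ι * ‖e‖ * ‖v‖) • z := by
        rw [Finset.sum_const, Finset.card_univ, ← Nat.cast_smul_eq_nsmul ℝ, smul_smul, mul_assoc]

variable {E : Type*} [NormedAddCommGroup E] [Lattice E] [HasSolidNorm E] [IsOrderedAddMonoid E]
  [NormedSpace ℝ E] {F : Submodule ℝ E} [FiniteDimensional ℝ F] {u : ℕ → E}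

lemma Monotone.exists_tendsto_of_finiteDimensional (hu : Monotone u) (huF : ∀ n, u n ∈ F)
    {r : ℝ} (hr : ∀ n, ‖u n‖ ≤ r) : ∃ z ∈ F, Tendsto u atTop (𝓝 z) := by
  obtain ⟨z, -, φ, hφ, hlim⟩ := tendsto_subseq_of_bounded (Metric.isBounded_closedBall (x := 0))
    (x := fun n ↦ (⟨u n, huF n⟩ : F)) fun n ↦ by simpa using hr n
  exact ⟨z, z.2, hu.tendsto_of_tendsto_subseq hφ ((continuous_subtype_val.tendsto z).comp hlim)⟩

lemma eventually_sub_le_smul_of_tendsto {z : E} (huF : ∀ n, u n ∈ F) (hzF : z ∈ F)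
    (hu : ∀ n, 0 ≤ u n) (hle : ∀ n, u n ≤ z) (hlim : Tendsto u atTop (𝓝 z)) {ε : ℝ}
    (hε : 0 < ε) : ∀ᶠ n in atTop, z - u n ≤ ε • z := by
  set s := {v | v ∈ F ∧ 0 ≤ v ∧ v ≤ z}
  have : FiniteDimensional ℝ (Submodule.span ℝ s) :=
    Submodule.finiteDimensional_of_le (Submodule.span_le.2 fun _ hv ↦ hv.1)
  obtain ⟨C, hC⟩ := exists_le_mul_norm_smul_of_subset_Icc (s := s) fun _ hv ↦ hv.2
  have hsmall : Tendsto (fun n ↦ C * ‖z - u n‖) atTop (𝓝 0) := by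
    simpa [norm_sub_rev] using (tendsto_iff_norm_sub_tendsto_zero.1 hlim).const_mul C
  filter_upwards [hsmall.eventually (gt_mem_nhds hε)] with n hn
  exact (hC _ (Submodule.subset_span
    ⟨F.sub_mem hzF (huF n), sub_nonneg.2 (hle n), sub_le_self z (hu n)⟩)).trans
    (smul_le_smul_of_nonneg_right hn.le ((hu 0).trans (hle 0)))

end FiniteDimensional

section LatticeHom

lemma monotone_of_map_sup_s13 {α β : Type*} [Lattice α] [Lattice β] {f : α → β}
    (hf : ∀ a b, f (a ⊔ b) = f a ⊔ f b) : Monotone f := fun a b hab ↦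
  calc f a ≤ f a ⊔ f b := le_sup_left
    _ = f b := by rw [← hf, sup_eq_right.2 hab]

lemma map_abs_of_map_sup_s13 {α β F : Type*} [Lattice α] [AddGroup α] [Lattice β] [AddGroup β]
    [FunLike F α β] [AddMonoidHomClass F α β] {f : F} (hf : ∀ a b, f (a ⊔ b) = f a ⊔ f b)
    (a : α) : f |a| = |f a| := by
  rw [abs, abs, hf, map_neg]

lemma map_inf_of_map_sup {α β F : Type*} [Lattice α] [AddCommGroup α] [IsOrderedAddMonoid α]
    [Lattice β] [AddCommGroup β] [IsOrderedAddMonoid β] [FunLike F α β] [AddMonoidHomClass F α β]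
    {f : F} (hf : ∀ a b, f (a ⊔ b) = f a ⊔ f b) (a b : α) : f (a ⊓ b) = f a ⊓ f b := by
  rw [eq_sub_of_add_eq (inf_add_sup a b), map_sub, map_add, hf,
    ← eq_sub_of_add_eq (inf_add_sup _ _)]

end LatticeHom

section AMSpace

variable {X Y : Type*} [NormedAddCommGroup X] [Lattice X] [HasSolidNorm X] [IsOrderedAddMonoid X]
  [NormedSpace ℝ X] [NormedAddCommGroup Y] [Lattice Y] [HasSolidNorm Y] [IsOrderedAddMonoid Y]
  [NormedSpace ℝ Y]

lemma ContinuousLinearMap.exists_nonneg_lt_apply_of_map_sup {T : X →L[ℝ] Y}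
    (hT : ∀ a b, T (a ⊔ b) = T a ⊔ T b) {r : ℝ} (hr : r < ‖T‖) :
    ∃ x, 0 ≤ x ∧ ‖x‖ ≤ 1 ∧ r < ‖T x‖ := by
  obtain ⟨x, hx, hrx⟩ := T.exists_lt_apply_of_lt_opNorm hr
  exact ⟨|x|, abs_nonneg x, (norm_abs_eq_norm x).trans_le hx.le,
    by rwa [map_abs_of_map_sup_s13 hT, norm_abs_eq_norm]⟩

lemma ContinuousLinearMap.exists_monotone_tendsto_opNorm_of_map_sup
    (hAM : ∀ x y : X, 0 ≤ x → 0 ≤ y → ‖x ⊔ y‖ = max ‖x‖ ‖y‖) {T : X →L[ℝ] Y}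
    (hT : ∀ a b, T (a ⊔ b) = T a ⊔ T b) :
    ∃ y : ℕ → X, Monotone y ∧ (∀ n, 0 ≤ y n ∧ ‖y n‖ ≤ 1) ∧
      Tendsto (fun n ↦ ‖T (y n)‖) atTop (𝓝 ‖T‖) := by
  have hlt : ∀ n : ℕ, ‖T‖ - 1 / (n + 1) < ‖T‖ := fun n ↦ sub_lt_self _ Nat.one_div_pos_of_nat
  choose x hx0 hx1 hTx using fun n ↦ T.exists_nonneg_lt_apply_of_map_sup hT (hlt n)
  have hy : ∀ n, 0 ≤ partialSups x n ∧ ‖partialSups x n‖ ≤ 1 := by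
    intro n
    induction n with
    | zero => simpa using ⟨hx0 0, hx1 0⟩
    | succ n ih =>
      rw [partialSups_add_one, hAM _ _ ih.1 (hx0 _)]
      exact ⟨ih.1.trans le_sup_left, max_le ih.2 (hx1 _)⟩
  refine ⟨partialSups x, (partialSups x).monotone, hy, ?_⟩
  have hlow : Tendsto (fun n : ℕ ↦ ‖T‖ - 1 / (n + 1)) atTop (𝓝 ‖T‖) := by
    simpa using tendsto_const_nhds.sub (tendsto_one_div_add_atTop_nhds_zero_nat (𝕜 := ℝ))
  refine tendsto_of_tendsto_of_tendsto_of_le_of_le hlow tendsto_const_nhds (fun n ↦ ?_) fun n ↦ ?_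
  · have hmono := monotone_of_map_sup_s13 hT
    exact (hTx n).le.trans <| norm_le_norm_of_nonneg_of_le (by simpa using hmono (hx0 n))
      (hmono (le_partialSups x n))
  · simpa using T.le_opNorm_of_le (hy n).2

structure IsUnitBallApprox (T : X → Y) (z : Y) (ε : ℝ) (x : X) : Prop where
  nonneg : 0 ≤ x
  norm_le_one : ‖x‖ ≤ 1
  apply_le : T x ≤ z
  sub_apply_le : z - T x ≤ ε • z

/-- The truncation `a ⊔ (y ⊓ (a + 2ε y))` stays within `2ε` of `a` but inherits the better
approximation of `y`. -/
lemma IsUnitBallApprox.exists_close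
    (hAM : ∀ x y : X, 0 ≤ x → 0 ≤ y → ‖x ⊔ y‖ = max ‖x‖ ‖y‖) {T : X →L[ℝ] Y}
    (hT : ∀ a b, T (a ⊔ b) = T a ⊔ T b) {z : Y} {ε : ℝ} (hε₀ : 0 ≤ ε) (hε₁ : ε ≤ 1) {a y : X}
    (ha : IsUnitBallApprox T z ε a) (hy : IsUnitBallApprox T z (ε / 2) y) :
    ∃ b, IsUnitBallApprox T z (ε / 2) b ∧ ‖b - a‖ ≤ 2 * ε := by
  have hz : 0 ≤ z := (map_zero T ▸ monotone_of_map_sup_s13 hT ha.nonneg).trans ha.apply_le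
  have hTy : z - (ε / 2) • z ≤ T y := sub_le_comm.1 hy.sub_apply_le
  have hTa : z - ε • z ≤ T a := sub_le_comm.1 ha.sub_apply_le
  have hab : a ≤ a ⊔ (y ⊓ (a + (2 * ε) • y)) := le_sup_left
  have hba : a ⊔ (y ⊓ (a + (2 * ε) • y)) - a ≤ (2 * ε) • y := sub_le_iff_le_add'.2 <|
    sup_le (le_add_of_nonneg_right (smul_nonneg (by positivity) hy.nonneg)) inf_le_right
  have hTb : T (a ⊔ (y ⊓ (a + (2 * ε) • y))) = T a ⊔ (T y ⊓ (T a + (2 * ε) • T y)) := by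
    rw [hT, map_inf_of_map_sup hT, map_add, map_smul]
  have hsum : z - (ε / 2) • z ≤ T a + (2 * ε) • T y := by
    refine le_trans ?_ (add_le_add hTa (smul_le_smul_of_nonneg_left hTy (by positivity)))
    calc z - (ε / 2) • z ≤ z + (ε - ε * ε) • z :=
          (sub_le_self _ (smul_nonneg (by positivity) hz)).trans
            (le_add_of_nonneg_right (smul_nonneg (by nlinarith) hz))
      _ = z - ε • z + (2 * ε) • (z - (ε / 2) • z) := by module
  refine ⟨_, ⟨ha.nonneg.trans hab, ?_, ?_, ?_⟩, ?_⟩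
  · calc _ ≤ ‖a ⊔ y‖ := norm_le_norm_of_nonneg_of_le (ha.nonneg.trans hab)
          (sup_le_sup_left inf_le_left a)
      _ ≤ 1 := by rw [hAM a y ha.nonneg hy.nonneg]; exact max_le ha.norm_le_one hy.norm_le_one
  · rw [hTb]
    exact sup_le ha.apply_le (inf_le_left.trans hy.apply_le)
  · rw [hTb, sub_le_comm]
    exact le_sup_of_le_right (le_inf hTy hsum)
  · calc _ ≤ ‖(2 * ε) • y‖ := norm_le_norm_of_nonneg_of_le (sub_nonneg.2 hab) hba
      _ ≤ 2 * ε := by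
        rw [norm_smul, Real.norm_of_nonneg (by positivity)]
        exact mul_le_of_le_one_right (by positivity) hy.norm_le_one

lemma exists_apply_eq_of_forall_isUnitBallApprox [CompleteSpace X]
    (hAM : ∀ x y : X, 0 ≤ x → 0 ≤ y → ‖x ⊔ y‖ = max ‖x‖ ‖y‖) {T : X →L[ℝ] Y}
    (hT : ∀ a b, T (a ⊔ b) = T a ⊔ T b) {z : Y}
    (happrox : ∀ ε > 0, ∃ x, IsUnitBallApprox T z ε x) : ∃ x, ‖x‖ ≤ 1 ∧ T x = z := by
  have hstep : ∀ (n : ℕ) a, IsUnitBallApprox T z ((2⁻¹ : ℝ) ^ n) a →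
      ∃ b, IsUnitBallApprox T z ((2⁻¹ : ℝ) ^ (n + 1)) b ∧ ‖b - a‖ ≤ 2 * (2⁻¹ : ℝ) ^ n := by
    intro n a ha
    obtain ⟨y, hy⟩ := happrox ((2⁻¹ : ℝ) ^ n / 2) (by positivity)
    rw [pow_succ, ← div_eq_mul_inv]
    exact ha.exists_close hAM hT (by positivity) (pow_le_one₀ (by norm_num) (by norm_num)) hy
  choose! next hnext hdist using hstep
  obtain ⟨a₀, ha₀⟩ := happrox 1 one_pos
  let a : ℕ → X := fun n ↦ Nat.rec a₀ next n
  have ha : ∀ n, IsUnitBallApprox T z ((2⁻¹ : ℝ) ^ n) (a n) := by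
    intro n
    induction n with
    | zero => rw [pow_zero]; exact ha₀
    | succ n ih => exact hnext n _ ih
  have hcauchy : CauchySeq a := cauchySeq_of_le_geometric 2⁻¹ 2 (by norm_num) fun n ↦ by
    rw [dist_eq_norm']
    exact hdist n _ (ha n)
  obtain ⟨x, hx⟩ := cauchySeq_tendsto_of_complete hcauchy
  refine ⟨x, le_of_tendsto' hx.norm fun n ↦ (ha n).norm_le_one,
    tendsto_nhds_unique ((T.continuous.tendsto x).comp hx) ?_⟩
  exact tendsto_of_sub_le_smul (fun n ↦ (ha n).apply_le) (fun n ↦ (ha n).sub_apply_le)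
    (tendsto_pow_atTop_nhds_zero_of_lt_one (by norm_num) (by norm_num))

end AMSpace

theorem finiteRank_latticeHom_from_AM_space_attains_norm_general
    {X Y : Type*} [NormedAddCommGroup X] [Lattice X] [HasSolidNorm X] [IsOrderedAddMonoid X] [NormedSpace ℝ X] [CompleteSpace X]
    [NormedAddCommGroup Y] [Lattice Y] [HasSolidNorm Y] [IsOrderedAddMonoid Y] [NormedSpace ℝ Y]
    (hAM : ∀ x y : X, 0 ≤ x → 0 ≤ y → ‖x ⊔ y‖ = max ‖x‖ ‖y‖)
    (T : X →L[ℝ] Y)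
    (hhom : ∀ x y : X, T (x ⊔ y) = T x ⊔ T y)
    (hrank : FiniteDimensional ℝ (LinearMap.range (T : X →ₗ[ℝ] Y))) :
    ∃ x₀ : X, ‖x₀‖ ≤ 1 ∧ ‖T x₀‖ = ‖T‖ := by
  obtain ⟨y, hy_mono, hy, hTy⟩ := T.exists_monotone_tendsto_opNorm_of_map_sup hAM hhom
  have hTy_mono : Monotone (T ∘ y) := (monotone_of_map_sup_s13 hhom).comp hy_mono
  have hTy_range : ∀ n, T (y n) ∈ LinearMap.range (T : X →ₗ[ℝ] Y) := fun n ↦ ⟨y n, rfl⟩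
  obtain ⟨z, hzF, hlim⟩ :=
    hTy_mono.exists_tendsto_of_finiteDimensional hTy_range fun n ↦ T.le_opNorm_of_le (hy n).2
  have hTy_nonneg : ∀ n, 0 ≤ T (y n) := fun n ↦
    map_zero T ▸ monotone_of_map_sup_s13 hhom (hy n).1
  have happrox : ∀ ε > 0, ∃ x, IsUnitBallApprox T z ε x := fun ε hε ↦ by
    obtain ⟨n, hn⟩ := (eventually_sub_le_smul_of_tendsto hTy_range hzF hTy_nonneg
      (hTy_mono.ge_of_tendsto hlim) hlim hε).exists
    exact ⟨y n, (hy n).1, (hy n).2, hTy_mono.ge_of_tendsto hlim n, hn⟩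
  obtain ⟨x₀, hx₀, hTx₀⟩ := exists_apply_eq_of_forall_isUnitBallApprox hAM hhom happrox
  exact ⟨x₀, hx₀, hTx₀ ▸ tendsto_nhds_unique hlim.norm hTy⟩

/-- every finite-rank lattice homomorphism from an AM-space into a Banach
lattice attains its norm. -/
theorem finiteRank_latticeHom_from_AM_space_attains_norm
    {X Y : Type*} [NormedAddCommGroup X] [Lattice X] [HasSolidNorm X] [IsOrderedAddMonoid X] [NormedSpace ℝ X] [CompleteSpace X]
    [NormedAddCommGroup Y] [Lattice Y] [HasSolidNorm Y] [IsOrderedAddMonoid Y] [NormedSpace ℝ Y] [CompleteSpace Y]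
    (hAM : ∀ x y : X, 0 ≤ x → 0 ≤ y → ‖x ⊔ y‖ = max ‖x‖ ‖y‖)
    (T : X →L[ℝ] Y)
    (hhom : ∀ x y : X, T (x ⊔ y) = T x ⊔ T y)
    (hrank : FiniteDimensional ℝ (LinearMap.range (T : X →ₗ[ℝ] Y))) :
    ∃ x₀ : X, ‖x₀‖ ≤ 1 ∧ ‖T x₀‖ = ‖T‖ :=
  finiteRank_latticeHom_from_AM_space_attains_norm_general hAM T hhom hrank
end
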